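/- For integers a > b > 0 and c = a - b + 1, the following identity of Schur polynomials in three variables holds: s_{(c,c,0)} · s_{(a+1,a+1,1)} = s_{(a+1,b,1)} · s_{(c,c,c)} + s_{(a+1,a+1,0)} · s_{(c,c,1)}. -/

import Mathlib

/-!
Write `D(r, s, t)` for the determinant whose rows are the windows `(h_k, h_{k+1}, h_{k+2})`,
`k = r, s, t`, of the complete homogeneous polynomials in three variables, so that
`s_{(x,y,z)} = D(x, y - 1, z - 2)`. For `k ≥ -2` the sequence `h_k` satisfies the linear recurrence
with characteristic polynomial `(T - x₀)(T - x₁)(T - x₂)`, hence raising all three indices by one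
multiplies `D` by `e₃ = x₀x₁x₂`; in particular `s_{(c,c,c)} = e₃^c`.
A three-term Grassmann–Plücker relation writes the left-hand side as the second term on the right
plus `D(c, c-1, a+1) h_a - D(c, c-1, a) h_{a+1}`. Shifting down by `c + 1` turns this into
`e₃^{c+1} (h_a h_{b-1} - h_{a+1} h_{b-2})`, a two-row Jacobi–Trudi determinant, and this is
`s_{(a+1,b,1)} s_{(c,c,c)}`.
-/

open MvPolynomial

/-- Complete homogeneous symmetric polynomial in `n` variables, indexed by an
integer, with the convention `h_k = 0` for `k < 0` and `h_0 = 1`. -/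
noncomputable def hInt (n : ℕ) (k : ℤ) : MvPolynomial (Fin n) ℤ :=
  if 0 ≤ k then hsymm (Fin n) ℤ k.toNat else 0

/-- The Schur polynomial of `α` in `n` variables, defined via the
Jacobi–Trudi determinant `s_α = det (h_{α_i - i + j})_{i,j}`. -/
noncomputable def schur (n : ℕ) (α : Fin n → ℕ) : MvPolynomial (Fin n) ℤ :=
  Matrix.det (Matrix.of fun i j : Fin n => hInt n ((α i : ℤ) - (i : ℕ) + (j : ℕ)))

/-- A symmetric polynomial is Schur positive if it is a nonnegative integer
combination of Schur polynomials of partitions. -/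
def SchurPositive (n : ℕ) (f : MvPolynomial (Fin n) ℤ) : Prop :=
  ∃ c : (Fin n → ℕ) →₀ ℕ, (∀ lam ∈ c.support, Antitone lam) ∧
    f = c.sum fun lam k => (k : ℤ) • schur n lam

namespace MvPolynomial

variable {σ R : Type*} [CommSemiring R] [DecidableEq σ] [Fintype σ]

theorem hsymm_option_succ (n : ℕ) :
    hsymm (Option σ) R (n + 1) =
      X none * hsymm (Option σ) R n + rename some (hsymm σ R (n + 1)) := by
  simp only [hsymm, Finset.mul_sum, map_sum, map_multiset_prod, Multiset.map_map]
  rw [← (symOptionSuccEquiv (α := σ) (n := n)).symm.sum_comp, Fintype.sum_sum_type]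
  simp [symOptionSuccEquiv, Sym.map, Function.comp_def, Sym.coe_cons]

theorem hsymm_fin_succ (n k : ℕ) :
    hsymm (Fin (n + 1)) R (k + 1) =
      X 0 * hsymm (Fin (n + 1)) R k + rename Fin.succ (hsymm (Fin n) R (k + 1)) := by
  simpa [rename_hsymm, rename_rename, Function.comp_def] using
    congrArg (rename (_root_.finSuccEquiv n).symm) (hsymm_option_succ (σ := Fin n) (R := R) k)

theorem hsymm_of_isEmpty [IsEmpty σ] (n : ℕ) : hsymm σ R (n + 1) = 0 := by
  simp [hsymm]

end MvPolynomial

theorem hInt_of_neg {n : ℕ} {k : ℤ} (hk : k < 0) : hInt n k = 0 := by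
  simp [hInt, hk]

theorem hInt_zero (n : ℕ) : hInt n 0 = 1 := by
  simp [hInt]

theorem hInt_fin_zero_of_pos {k : ℤ} (hk : 0 < k) : hInt 0 k = 0 := by
  obtain ⟨m, rfl⟩ := Int.eq_succ_of_zero_lt hk
  simpa [hInt, show (0 : ℤ) ≤ m + 1 by omega] using
    MvPolynomial.hsymm_of_isEmpty (σ := Fin 0) (R := ℤ) m

theorem hInt_succ (n : ℕ) (k : ℤ) :
    hInt (n + 1) (k + 1) = X 0 * hInt (n + 1) k + rename Fin.succ (hInt n (k + 1)) := by
  rcases lt_trichotomy k (-1) with hk | rfl | hk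
  · simp [hInt_of_neg (show k < 0 by omega), hInt_of_neg (show k + 1 < 0 by omega)]
  · simp [hInt_zero, hInt_of_neg (show (-1 : ℤ) < 0 by norm_num)]
  · obtain ⟨m, rfl⟩ := Int.eq_ofNat_of_zero_le (show 0 ≤ k by omega)
    simpa [hInt, show (0 : ℤ) ≤ m + 1 by omega] using MvPolynomial.hsymm_fin_succ n m

/- In generating-series form `hInt_succ` reads `(1 - x₀T) H₃(T) = H₂(x₁, x₂; T)`; peeling off all
three variables gives `(1 - x₀T)(1 - x₁T)(1 - x₂T) H₃(T) = 1`, whose coefficients are this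
recurrence. -/
theorem hInt_three_add_three {k : ℤ} (hk : -2 ≤ k) :
    hInt 3 (k + 3) = (X 0 + X 1 + X 2) * hInt 3 (k + 2)
      - (X 0 * X 1 + X 0 * X 2 + X 1 * X 2) * hInt 3 (k + 1) + X 0 * X 1 * X 2 * hInt 3 k := by
  have peel₃ (j : ℤ) : hInt 3 (j + 1) = X 0 * hInt 3 j + rename Fin.succ (hInt 2 (j + 1)) :=
    hInt_succ 2 j
  have peel₂ (j : ℤ) : rename Fin.succ (hInt 2 (j + 1)) =
      X 1 * rename Fin.succ (hInt 2 j) + rename (Fin.succ ∘ Fin.succ) (hInt 1 (j + 1)) := by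
    simpa [rename_rename] using congrArg (rename Fin.succ) (hInt_succ 1 j)
  have peel₁ : rename (Fin.succ ∘ Fin.succ) (hInt 1 (k + 3)) =
      X 2 * rename (Fin.succ ∘ Fin.succ) (hInt 1 (k + 2)) := by
    simpa [rename_rename, add_assoc, hInt_fin_zero_of_pos (show 0 < k + 3 by omega)]
      using congrArg (rename (Fin.succ ∘ Fin.succ)) (hInt_succ 0 (k + 2))
  have h₃ := peel₃ (k + 2)
  have h₂ := peel₃ (k + 1)
  have h₁ := peel₃ k
  have b₃ := peel₂ (k + 2)
  have b₂ := peel₂ (k + 1)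
  ring_nf at h₃ h₂ h₁ b₃ b₂ peel₁ ⊢
  linear_combination h₃ - (X 1 + X 2) * h₂ + X 1 * X 2 * h₁ + b₃ - X 2 * b₂ + peel₁

theorem Matrix.plucker_relation_fin_three {R : Type*} [CommRing R] (p q r s t u : Fin 3 → R) :
    det (of ![p, q, r]) * det (of ![s, t, u]) =
      det (of ![p, q, s]) * det (of ![r, t, u]) - det (of ![p, q, t]) * det (of ![r, s, u]) +
        det (of ![p, q, u]) * det (of ![r, s, t]) := by
  simp [Matrix.det_fin_three]
  ring

section WindowDet

variable {R : Type*} [CommRing R]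

def window (h : ℤ → R) (k : ℤ) : Fin 3 → R := fun j => h (k + j)

def windowDet (h : ℤ → R) (r s t : ℤ) : R :=
  Matrix.det (Matrix.of ![window h r, window h s, window h t])

variable {h : ℤ → R} {m : ℤ} {c₁ c₂ c₃ : R}

theorem windowDet_eq (r s t : ℤ) : windowDet h r s t =
    h r * (h (s + 1) * h (t + 2) - h (s + 2) * h (t + 1)) -
      h (r + 1) * (h s * h (t + 2) - h (s + 2) * h t) +
        h (r + 2) * (h s * h (t + 1) - h (s + 1) * h t) := by
  simp [windowDet, window, Matrix.det_fin_three]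
  ring

theorem windowDet_rotate (r s t : ℤ) : windowDet h r s t = windowDet h s t r := by
  simp only [windowDet_eq]
  ring

theorem windowDet_mul_windowDet (p q r s t u : ℤ) :
    windowDet h p q r * windowDet h s t u =
      windowDet h p q s * windowDet h r t u - windowDet h p q t * windowDet h r s u +
        windowDet h p q u * windowDet h r s t :=
  Matrix.plucker_relation_fin_three _ _ _ _ _ _

theorem windowDet_neg_two (h₂ : h (-2) = 0) (h₁ : h (-1) = 0) (h₀ : h 0 = 1) (r s : ℤ) :
    windowDet h r s (-2) = h r * h (s + 1) - h (r + 1) * h s := by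
  norm_num [windowDet_eq, h₂, h₁, h₀]

theorem windowDet_add_one
    (hrec : ∀ k ≥ m, h (k + 3) = c₁ * h (k + 2) - c₂ * h (k + 1) + c₃ * h k)
    {r s t : ℤ} (hr : m ≤ r) (hs : m ≤ s) (ht : m ≤ t) :
    windowDet h (r + 1) (s + 1) (t + 1) = c₃ * windowDet h r s t := by
  simp only [windowDet_eq, add_assoc, show (1 + 1 : ℤ) = 2 by norm_num,
    show (1 + 2 : ℤ) = 3 by norm_num, hrec r hr, hrec s hs, hrec t ht]
  ring

theorem windowDet_add_nat
    (hrec : ∀ k ≥ m, h (k + 3) = c₁ * h (k + 2) - c₂ * h (k + 1) + c₃ * h k)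
    (n : ℕ) {r s t : ℤ} (hr : m ≤ r) (hs : m ≤ s) (ht : m ≤ t) :
    windowDet h (r + n) (s + n) (t + n) = c₃ ^ n * windowDet h r s t := by
  induction n with
  | zero => simp
  | succ n ih =>
    push_cast
    simp only [← add_assoc]
    rw [windowDet_add_one hrec (by omega) (by omega) (by omega), ih, pow_succ']
    ring

theorem windowDet_identity_family2_third
    (hrec : ∀ k ≥ -2, h (k + 3) = c₁ * h (k + 2) - c₂ * h (k + 1) + c₃ * h k)
    (h₂ : h (-2) = 0) (h₁ : h (-1) = 0) (h₀ : h 0 = 1) {a b : ℤ} (hb : 0 ≤ b) (hab : b ≤ a) :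
    windowDet h (a - b + 1) (a - b) (-2) * windowDet h (a + 1) a (-1) =
      windowDet h (a + 1) (b - 1) (-1) * windowDet h (a - b + 1) (a - b) (a - b - 1) +
        windowDet h (a + 1) a (-2) * windowDet h (a - b + 1) (a - b) (-1) := by
  obtain ⟨d, hd⟩ := Int.eq_ofNat_of_zero_le (sub_nonneg.mpr hab)
  have minor := windowDet_neg_two h₂ h₁ h₀
  have single (k : ℤ) : windowDet h (-2) k (-1) = h k := by
    rw [windowDet_rotate, minor]
    norm_num [h₀, h₁]
  have shift (n : ℕ) {r s t r' s' t' : ℤ} (hr : -2 ≤ r) (hs : -2 ≤ s) (ht : -2 ≤ t)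
      (hr' : r' = r + n) (hs' : s' = s + n) (ht' : t' = t + n) :
      windowDet h r' s' t' = c₃ ^ n * windowDet h r s t := by
    subst hr' hs' ht'
    exact windowDet_add_nat hrec n hr hs ht
  have top : windowDet h (a - b + 1) (a - b) (a + 1) = c₃ ^ (d + 2) * h (b - 1) := by
    rw [shift (d + 2) (r := -1) (s := -2) (t := b - 1) (by norm_num) (by norm_num) (by omega)
      (by omega) (by omega) (by omega), windowDet_rotate, single]
  have mid : windowDet h (a - b + 1) (a - b) a = c₃ ^ (d + 2) * h (b - 2) := by
    rw [shift (d + 2) (r := -1) (s := -2) (t := b - 2) (by norm_num) (by norm_num) (by omega)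
      (by omega) (by omega) (by omega), windowDet_rotate, single]
  have diag : windowDet h (a - b + 1) (a - b) (a - b - 1) = c₃ ^ (d + 1) := by
    rw [shift (d + 1) (r := 0) (s := -1) (t := -2) (by norm_num) (by norm_num) (by norm_num)
      (by omega) (by omega) (by omega), minor]
    norm_num [h₀, h₁]
  have skew :
      windowDet h (a + 1) (b - 1) (-1) = c₃ * (h a * h (b - 1) - h (a + 1) * h (b - 2)) := by
    rw [shift 1 (r := a) (s := b - 2) (t := -2) (by omega) (by omega) (by norm_num)
      (by omega) (by omega) (by omega), minor]
    ring_nf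
  rw [windowDet_mul_windowDet _ _ (-2) (a + 1) a (-1), top, mid, diag, skew, single, single,
    windowDet_rotate (-2) (a + 1) a]
  ring

end WindowDet

theorem schur_three_eq_windowDet (x y z : ℕ) :
    schur 3 ![x, y, z] = windowDet (hInt 3) x (y - 1) (z - 2) := by
  rw [schur, windowDet]
  congr 1
  ext i j
  fin_cases i <;> simp [window]

theorem schur_identity_family2_third_general (a b : ℕ) (hab : b < a) :
    schur 3 ![a - b + 1, a - b + 1, 0] * schur 3 ![a + 1, a + 1, 1] =
      schur 3 ![a + 1, b, 1] * schur 3 ![a - b + 1, a - b + 1, a - b + 1] +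
      schur 3 ![a + 1, a + 1, 0] * schur 3 ![a - b + 1, a - b + 1, 1] := by
  have key := windowDet_identity_family2_third (fun k hk => hInt_three_add_three hk)
    (hInt_of_neg (by norm_num)) (hInt_of_neg (by norm_num)) (hInt_zero 3)
    (Int.natCast_nonneg b) (Int.ofNat_le.mpr hab.le)
  simp only [schur_three_eq_windowDet]
  push_cast [Nat.cast_sub hab.le]
  ring_nf at key ⊢
  exact key

/-- For `a > b > 0` and `c = a - b + 1`:
`s_{(c,c,0)} s_{(a+1,a+1,1)} = s_{(a+1,b,1)} s_{(c,c,c)} + s_{(a+1,a+1,0)} s_{(c,c,1)}`. -/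
theorem schur_identity_family2_third (a b : ℕ) (hab : b < a) (hb : 0 < b) :
    schur 3 ![a - b + 1, a - b + 1, 0] * schur 3 ![a + 1, a + 1, 1] =
      schur 3 ![a + 1, b, 1] * schur 3 ![a - b + 1, a - b + 1, a - b + 1] +
      schur 3 ![a + 1, a + 1, 0] * schur 3 ![a - b + 1, a - b + 1, 1] :=
  schur_identity_family2_third_general a b hab
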